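/- Let k be a natural number, h : {0,1}^k → ℝ a contingency table, j ∈ {0,1}^k, and let p = ‖j‖_1 − 1 (so 2^{p+1} indices γ satisfy γ ⪯ j). Let S ⊆ {0,1}^k be a finite set containing 0 and all γ ⪯ j, let ε > 0, t > 0, δ ∈ (0,1). Let (X_γ)_{γ ∈ S} be independent Laplace random variables with scale 2|S|·ε^{−1}·2^{−k/2}, and define the noisy Fourier coefficients z_γ = ⟨f^γ, h⟩ + X_γ for γ ≠ 0 and z_{0} = ⟨f^{0}, h⟩ + X_{0} + 4t|S|²·ε^{−1}·2^{−k/2}, and the perturbed marginal table h^j = Σ_{γ ⪯ j} z_γ · (C^j f^γ). Then with probability at least 1 − δ, ‖C^j h − h^j‖_1 ≤ (4|S|/ε)·( 2^{p}·ln(|S|/δ) + t·|S| ). -/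

import Mathlib

open MeasureTheory Finset

/-- The Laplace distribution on `ℝ` with scale `b`. -/
noncomputable def laplaceMeasure (b : ℝ) : Measure ℝ :=
  MeasureTheory.volume.withDensity fun x => ENNReal.ofReal (1 / (2 * b) * Real.exp (-|x| / b))

/-- `⟨γ,j⟩ = Σ_i γ_i j_i` on the Boolean hypercube `{0,1}^k`. -/
def cubeInner {k : ℕ} (γ j : Fin k → Bool) : ℕ :=
  (Finset.univ.filter fun i => γ i = true ∧ j i = true).card

/-- The Fourier basis vector `f^j`, with `f^j_γ = (−1)^{⟨γ,j⟩}·2^{−k/2}`. -/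
noncomputable def cubeFourier {k : ℕ} (j γ : Fin k → Bool) : ℝ :=
  (-1 : ℝ) ^ cubeInner γ j * (2 : ℝ) ^ (-(k : ℝ) / 2)

/-- The inner product of two tables, `⟨f,h⟩ = Σ_η f_η h_η`. -/
noncomputable def tdot {k : ℕ} (f h : (Fin k → Bool) → ℝ) : ℝ := ∑ η, f η * h η

/-- Coordinatewise product (meet) `η ∧ j` on `{0,1}^k`. -/
def meet {k : ℕ} (η j : Fin k → Bool) : Fin k → Bool := fun i => η i && j i

/-- The marginalisation operator: `(C^j h)_γ = Σ_{η : η ∧ j = γ} h_η`. -/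
noncomputable def proj {k : ℕ} (j : Fin k → Bool) (h : (Fin k → Bool) → ℝ)
    (γ : Fin k → Bool) : ℝ :=
  ∑ η ∈ Finset.univ.filter (fun η => meet η j = γ), h η

/-- `γ ⪯ j` iff `γ_i ≤ j_i` for all `i`. -/
def cubeLe {k : ℕ} (γ j : Fin k → Bool) : Prop := ∀ i, γ i ≤ j i

instance {k : ℕ} (j : Fin k → Bool) : DecidablePred (fun γ => cubeLe γ j) :=
  fun γ => inferInstanceAs (Decidable (∀ i, γ i ≤ j i))

/-- The noisy Fourier coefficient `z_γ = ⟨f^γ, h⟩ + X_γ`, incremented for `γ = 0` by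
the non-negativity shift `4t|S|²·ε⁻¹·2^{−k/2}`. -/
noncomputable def noisyCoef {k : ℕ} (S : Finset (Fin k → Bool))
    (h : (Fin k → Bool) → ℝ) (ε t : ℝ) (x : ↥S → ℝ) (γ : ↥S) : ℝ :=
  tdot (cubeFourier γ.1) h + x γ +
    if γ.1 = (fun _ => false) then
      4 * t * (S.card : ℝ) ^ 2 / ε * (2 : ℝ) ^ (-(k : ℝ) / 2) else 0

/-- The perturbed marginal table `h^j = Σ_{γ' ⪯ j} z_{γ'} · (C^j f^{γ'})`. -/
noncomputable def perturbedMarginal {k : ℕ} (S : Finset (Fin k → Bool))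
    (h : (Fin k → Bool) → ℝ) (j : Fin k → Bool)
    (hSj : ∀ γ, cubeLe γ j → γ ∈ S) (ε t : ℝ) (x : ↥S → ℝ)
    (γ : Fin k → Bool) : ℝ :=
  ∑ γ' ∈ (Finset.univ.filter fun γ' => cubeLe γ' j).attach,
    noisyCoef S h ε t x ⟨γ'.1, hSj γ'.1 (Finset.mem_filter.mp γ'.2).2⟩ *
      proj j (cubeFourier γ'.1) γ

/-!
Fourier inversion gives `C^j h = Σ_{γ ⪯ j} ⟨f^γ, h⟩ · C^j f^γ`, because `C^j f^γ` vanishes unless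
`γ ⪯ j`. Hence `C^j h − h^j` is the combination of the `C^j f^γ`, `γ ⪯ j`, whose coefficients are,
up to sign, the noises `X_γ` plus the shift at `γ = 0`, and since `‖C^j f^γ‖₁ ≤ 2^{k/2}` its `ℓ¹` norm is at
most `2^{k/2} (Σ_{γ ⪯ j} |X_γ| + shift)`. A Laplace variable of scale `b` lies in `[−bL, bL]`
with probability `1 − e^{−L}`; for `L = ln(|S|/δ)` independence and Bernoulli's inequality make
all `|S|` noises that small with probability `(1 − δ/|S|)^{|S|} ≥ 1 − δ`, and on that event the
`2^{p+1}` noises with `γ ⪯ j` contribute the first term of the bound, the shift the second.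
-/

lemma two_rpow_neg_half_mul_self (k : ℕ) :
    (2 : ℝ) ^ (-(k : ℝ) / 2) * (2 : ℝ) ^ (-(k : ℝ) / 2) = ((2 : ℝ) ^ k)⁻¹ := by
  rw [← Real.rpow_add two_pos, add_halves, Real.rpow_neg zero_le_two, Real.rpow_natCast]

section BoolCube

variable {k : ℕ}

lemma neg_one_pow_cubeInner_eq_prod (η γ : Fin k → Bool) :
    (-1 : ℝ) ^ cubeInner η γ = ∏ i, if η i = true ∧ γ i = true then (-1 : ℝ) else 1 := by
  rw [prod_ite, prod_const, prod_const, one_pow, mul_one, cubeInner]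

lemma sum_neg_one_pow_cubeInner_mul (η η' : Fin k → Bool) :
    ∑ γ, (-1 : ℝ) ^ cubeInner η γ * (-1 : ℝ) ^ cubeInner η' γ = if η = η' then 2 ^ k else 0 := by
  simp_rw [neg_one_pow_cubeInner_eq_prod, ← prod_mul_distrib]
  rw [← Fintype.prod_sum fun i (b : Bool) => (if η i = true ∧ b = true then (-1 : ℝ) else 1) *
    (if η' i = true ∧ b = true then (-1 : ℝ) else 1)]
  have hcoord : ∀ i, ∑ b : Bool, (if η i = true ∧ b = true then (-1 : ℝ) else 1) *
      (if η' i = true ∧ b = true then (-1 : ℝ) else 1) = if η i = η' i then 2 else 0 := by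
    intro i
    cases η i <;> cases η' i <;> norm_num [Fintype.sum_bool]
  simp_rw [hcoord]
  split_ifs with hη
  · simp [hη]
  · obtain ⟨i, hi⟩ := Function.ne_iff.mp hη
    exact prod_eq_zero (mem_univ i) (if_neg hi)

theorem sum_tdot_cubeFourier_mul (h : (Fin k → Bool) → ℝ) (η : Fin k → Bool) :
    ∑ γ, tdot (cubeFourier γ) h * cubeFourier γ η = h η := by
  have hterm : ∀ γ, tdot (cubeFourier γ) h * cubeFourier γ η =
      ∑ η', (-1 : ℝ) ^ cubeInner η γ * (-1 : ℝ) ^ cubeInner η' γ * (((2 : ℝ) ^ k)⁻¹ * h η') := by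
    intro γ
    rw [tdot, sum_mul, ← two_rpow_neg_half_mul_self]
    exact sum_congr rfl fun η' _ => by rw [cubeFourier, cubeFourier]; ring
  simp_rw [hterm]
  rw [sum_comm]
  simp_rw [← sum_mul, sum_neg_one_pow_cubeInner_mul, ite_mul, zero_mul]
  rw [sum_ite_eq, if_pos (mem_univ η), ← mul_assoc, mul_inv_cancel₀ (by positivity), one_mul]

lemma neg_one_pow_cubeInner_update_not {η γ : Fin k → Bool} {i₀ : Fin k} (hγ : γ i₀ = true) :
    (-1 : ℝ) ^ cubeInner (Function.update η i₀ (!η i₀)) γ = -(-1 : ℝ) ^ cubeInner η γ := by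
  rw [neg_one_pow_cubeInner_eq_prod, neg_one_pow_cubeInner_eq_prod,
    ← mul_prod_erase univ _ (mem_univ i₀), ← mul_prod_erase univ _ (mem_univ i₀),
    prod_congr rfl fun i hi => by rw [Function.update_of_ne (ne_of_mem_erase hi)]]
  cases η i₀ <;> simp [hγ]

/-- Off `γ ⪯ j`, flipping a coordinate where `γ` is set and `j` is not preserves the fibre of
`C^j` and reverses the sign of `f^γ`. -/
theorem proj_cubeFourier_eq_zero {γ j : Fin k → Bool} (hγj : ¬ cubeLe γ j) (β : Fin k → Bool) :
    proj j (cubeFourier γ) β = 0 := by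
  obtain ⟨i₀, hi₀⟩ := not_forall.mp hγj
  obtain ⟨hγ, hj⟩ : γ i₀ = true ∧ j i₀ = false := by
    revert hi₀; cases γ i₀ <;> cases j i₀ <;> decide
  refine sum_involution (fun η _ => Function.update η i₀ (!η i₀)) ?_ ?_ ?_ ?_
  · intro η _
    rw [cubeFourier, cubeFourier, neg_one_pow_cubeInner_update_not hγ]
    ring
  · intro η _ _ hfix
    simpa using congrFun hfix i₀
  · intro η hη
    simp only [mem_filter, mem_univ, true_and] at hη ⊢
    rw [← hη]
    funext i
    by_cases hi : i = i₀
    · subst hi; simp [meet, hj]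
    · simp [meet, Function.update_of_ne hi]
  · intro η _
    simp

theorem proj_eq_sum_tdot_mul_proj (j : Fin k → Bool) (h : (Fin k → Bool) → ℝ) (β : Fin k → Bool) :
    proj j h β =
      ∑ γ ∈ univ.filter (cubeLe · j), tdot (cubeFourier γ) h * proj j (cubeFourier γ) β := by
  rw [sum_filter_of_ne fun γ _ hγ => by
    contrapose! hγ; rw [proj_cubeFourier_eq_zero hγ, mul_zero]]
  simp_rw [proj, mul_sum]
  rw [sum_comm]
  exact sum_congr rfl fun η _ => (sum_tdot_cubeFourier_mul h η).symm

theorem card_filter_cubeLe (j : Fin k → Bool) :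
    #(univ.filter (cubeLe · j)) = 2 ^ #(univ.filter fun i => j i = true) := by
  rw [← Fintype.card_subtype]
  change Fintype.card {γ : Fin k → Bool // ∀ i, γ i ≤ j i} = _
  rw [Fintype.card_congr (Equiv.subtypePiEquivPi (β := fun _ : Fin k => Bool)
    (p := fun i b => b ≤ j i)), Fintype.card_pi]
  have hcoord : ∀ i, Fintype.card {b // b ≤ j i} = if j i = true then 2 else 1 := by
    intro i; cases j i <;> rfl
  simp_rw [hcoord]
  rw [prod_ite, prod_const, prod_const, one_pow, mul_one]

theorem sum_card_filter_meet_eq (j : Fin k → Bool) :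
    ∑ β ∈ univ.filter (cubeLe · j), #(univ.filter fun η => meet η j = β) = 2 ^ k := by
  rw [← card_eq_sum_card_fiberwise fun η _ => mem_filter.mpr
    ⟨mem_univ _, fun i => Bool.and_le_right (η i) (j i)⟩]
  simp

lemma abs_cubeFourier (γ η : Fin k → Bool) : |cubeFourier γ η| = (2 : ℝ) ^ (-(k : ℝ) / 2) := by
  rw [cubeFourier, abs_mul, abs_pow, abs_neg, abs_one, one_pow, one_mul,
    abs_of_pos (Real.rpow_pos_of_pos two_pos _)]

lemma abs_proj_cubeFourier_le (j γ β : Fin k → Bool) :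
    |proj j (cubeFourier γ) β| ≤
      #(univ.filter fun η => meet η j = β) * (2 : ℝ) ^ (-(k : ℝ) / 2) := by
  refine (abs_sum_le_sum_abs _ _).trans_eq ?_
  simp_rw [abs_cubeFourier, sum_const, nsmul_eq_mul]

theorem sum_abs_proj_sub_sum_le (j : Fin k → Bool) (h z : (Fin k → Bool) → ℝ) :
    ∑ β ∈ univ.filter (cubeLe · j),
        |proj j h β - ∑ γ ∈ univ.filter (cubeLe · j), z γ * proj j (cubeFourier γ) β| ≤
      2 ^ k * (2 : ℝ) ^ (-(k : ℝ) / 2) *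
        ∑ γ ∈ univ.filter (cubeLe · j), |z γ - tdot (cubeFourier γ) h| := by
  set B := univ.filter (cubeLe · j)
  set R : ℝ := (2 : ℝ) ^ (-(k : ℝ) / 2)
  have hdiff : ∀ β, proj j h β - ∑ γ ∈ B, z γ * proj j (cubeFourier γ) β =
      ∑ γ ∈ B, (tdot (cubeFourier γ) h - z γ) * proj j (cubeFourier γ) β := fun β => by
    rw [proj_eq_sum_tdot_mul_proj, ← sum_sub_distrib]
    exact sum_congr rfl fun γ _ => (sub_mul _ _ _).symm
  calc ∑ β ∈ B, |proj j h β - ∑ γ ∈ B, z γ * proj j (cubeFourier γ) β|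
      ≤ ∑ β ∈ B, ∑ γ ∈ B, |z γ - tdot (cubeFourier γ) h| *
          (#(univ.filter fun η => meet η j = β) * R) := by
        refine sum_le_sum fun β _ => ?_
        rw [hdiff]
        refine (abs_sum_le_sum_abs _ _).trans (sum_le_sum fun γ _ => ?_)
        rw [abs_mul, abs_sub_comm]
        exact mul_le_mul_of_nonneg_left (abs_proj_cubeFourier_le j γ β) (abs_nonneg _)
    _ = (∑ β ∈ B, (#(univ.filter fun η => meet η j = β) : ℝ)) * R *
          ∑ γ ∈ B, |z γ - tdot (cubeFourier γ) h| := by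
        rw [sum_comm]
        simp_rw [← mul_sum, ← sum_mul]
        ring
    _ = 2 ^ k * R * ∑ γ ∈ B, |z γ - tdot (cubeFourier γ) h| := by
        rw [← Nat.cast_sum, sum_card_filter_meet_eq]
        push_cast
        ring

lemma perturbedMarginal_eq_sum (S : Finset (Fin k → Bool)) (h : (Fin k → Bool) → ℝ)
    (j : Fin k → Bool) (hSj : ∀ γ, cubeLe γ j → γ ∈ S) (ε t : ℝ) (x : ↥S → ℝ) :
    perturbedMarginal S h j hSj ε t x = fun β => ∑ γ ∈ univ.filter (cubeLe · j),
      (if hγ : γ ∈ S then noisyCoef S h ε t x ⟨γ, hγ⟩ else 0) * proj j (cubeFourier γ) β := by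
  funext β
  rw [perturbedMarginal, ← sum_attach _ fun γ =>
    (if hγ : γ ∈ S then noisyCoef S h ε t x ⟨γ, hγ⟩ else 0) * proj j (cubeFourier γ) β]
  exact sum_congr rfl fun γ _ => by rw [dif_pos (hSj γ (mem_filter.mp γ.2).2)]

lemma noisyCoef_sub_tdot (S : Finset (Fin k → Bool)) (h : (Fin k → Bool) → ℝ) (ε t : ℝ)
    (x : ↥S → ℝ) (γ : ↥S) :
    noisyCoef S h ε t x γ - tdot (cubeFourier γ.1) h = x γ + if γ.1 = (fun _ => false) then
      4 * t * (S.card : ℝ) ^ 2 / ε * (2 : ℝ) ^ (-(k : ℝ) / 2) else 0 := by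
  rw [noisyCoef]
  ring

theorem sum_abs_proj_sub_perturbedMarginal_le (S : Finset (Fin k → Bool))
    (h : (Fin k → Bool) → ℝ) (j : Fin k → Bool) (hSj : ∀ γ, cubeLe γ j → γ ∈ S) {ε t c : ℝ}
    (hε : 0 ≤ ε) (ht : 0 ≤ t) (x : ↥S → ℝ) (hx : ∀ γ, |x γ| ≤ c) :
    ∑ β ∈ univ.filter (cubeLe · j), |proj j h β - perturbedMarginal S h j hSj ε t x β| ≤
      2 ^ k * (2 : ℝ) ^ (-(k : ℝ) / 2) * (#(univ.filter (cubeLe · j)) * c +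
        4 * t * (S.card : ℝ) ^ 2 / ε * (2 : ℝ) ^ (-(k : ℝ) / 2)) := by
  set shift := 4 * t * (S.card : ℝ) ^ 2 / ε * (2 : ℝ) ^ (-(k : ℝ) / 2)
  have hshift : 0 ≤ shift := by positivity
  rw [perturbedMarginal_eq_sum]
  refine (sum_abs_proj_sub_sum_le j h _).trans (mul_le_mul_of_nonneg_left ?_ (by positivity))
  have hzero : (fun _ => false) ∈ univ.filter (cubeLe · j) :=
    mem_filter.mpr ⟨mem_univ _, fun i => Bool.false_le (j i)⟩
  calc ∑ γ ∈ univ.filter (cubeLe · j),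
        |(if hγ : γ ∈ S then noisyCoef S h ε t x ⟨γ, hγ⟩ else 0) - tdot (cubeFourier γ) h|
      ≤ ∑ γ ∈ univ.filter (cubeLe · j), (c + if γ = fun _ => false then shift else 0) := by
        refine sum_le_sum fun γ hγ => ?_
        rw [dif_pos (hSj γ (mem_filter.mp hγ).2), noisyCoef_sub_tdot]
        exact (abs_add_le _ _).trans
          (add_le_add (hx _) (abs_of_nonneg (ite_nonneg hshift le_rfl)).le)
    _ = #(univ.filter (cubeLe · j)) * c + shift := by
        rw [sum_add_distrib, sum_const, nsmul_eq_mul, sum_ite_eq', if_pos hzero]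

theorem sum_abs_proj_sub_perturbedMarginal_le_of_abs_le (h : (Fin k → Bool) → ℝ)
    (j : Fin k → Bool) {p : ℕ} (hp : #(univ.filter fun i => j i = true) = p + 1)
    (S : Finset (Fin k → Bool)) (hSj : ∀ γ, cubeLe γ j → γ ∈ S) {ε t L : ℝ}
    (hε : 0 ≤ ε) (ht : 0 ≤ t) (x : ↥S → ℝ)
    (hx : ∀ γ, |x γ| ≤ 2 * S.card / ε * (2 : ℝ) ^ (-(k : ℝ) / 2) * L) :
    ∑ β ∈ univ.filter (cubeLe · j), |proj j h β - perturbedMarginal S h j hSj ε t x β| ≤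
      4 * S.card / ε * ((2 : ℝ) ^ p * L + t * S.card) := by
  refine (sum_abs_proj_sub_perturbedMarginal_le S h j hSj hε ht x hx).trans_eq ?_
  have hR : 2 ^ k * ((2 : ℝ) ^ (-(k : ℝ) / 2) * (2 : ℝ) ^ (-(k : ℝ) / 2)) = 1 := by
    rw [two_rpow_neg_half_mul_self, mul_inv_cancel₀ (by positivity)]
  rw [card_filter_cubeLe, hp]
  push_cast
  linear_combination (2 ^ (p + 2) * S.card / ε * L + 4 * t * S.card ^ 2 / ε) * hR

end BoolCube

section Laplace

open Real

lemma integral_exp_neg_div (b c : ℝ) (hb : b ≠ 0) :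
    ∫ x in (0 : ℝ)..c, exp (-x / b) = b * (1 - exp (-(c / b))) := by
  have hderiv : ∀ x ∈ Set.uIcc 0 c, HasDerivAt (fun y => -b * exp (-y / b)) (exp (-x / b)) x :=
    fun x _ => by
      have hlin : HasDerivAt (fun y => -y / b) (-1 / b) x := by
        simpa using (hasDerivAt_id x).neg.div_const b
      exact (hlin.exp.const_mul (-b)).congr_deriv (by field_simp)
  rw [intervalIntegral.integral_eq_sub_of_hasDerivAt hderiv
    (by apply Continuous.intervalIntegrable; fun_prop)]
  simp only [neg_zero, zero_div, exp_zero, neg_div]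
  ring

lemma integral_exp_neg_abs_div (b c : ℝ) (hb : b ≠ 0) (hc : 0 ≤ c) :
    ∫ x in -c..c, exp (-|x| / b) = 2 * b * (1 - exp (-(c / b))) := by
  have hint : ∀ u v : ℝ, IntervalIntegrable (fun x => exp (-|x| / b)) volume u v :=
    fun u v => by apply Continuous.intervalIntegrable; fun_prop
  have hright : ∫ x in (0 : ℝ)..c, exp (-|x| / b) = ∫ x in (0 : ℝ)..c, exp (-x / b) :=
    intervalIntegral.integral_congr fun x hx => by
      rw [Set.uIcc_of_le hc] at hx
      rw [abs_of_nonneg hx.1]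
  have hleft : ∫ x in -c..0, exp (-|x| / b) = ∫ x in (0 : ℝ)..c, exp (-|x| / b) := by
    simpa using (intervalIntegral.integral_comp_neg (a := 0) (b := c)
      fun x => exp (-|x| / b)).symm
  rw [← intervalIntegral.integral_add_adjacent_intervals (hint _ 0) (hint 0 _), hleft, hright,
    integral_exp_neg_div b c hb]
  ring

instance (b : ℝ) : SigmaFinite (laplaceMeasure b) := by
  unfold laplaceMeasure
  infer_instance

theorem laplaceMeasure_Icc {b c : ℝ} (hb : 0 < b) (hc : 0 ≤ c) :
    laplaceMeasure b (Set.Icc (-c) c) = ENNReal.ofReal (1 - exp (-(c / b))) := by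
  have hdensity : Continuous fun x : ℝ => 1 / (2 * b) * exp (-|x| / b) := by fun_prop
  rw [laplaceMeasure, withDensity_apply _ measurableSet_Icc,
    ← ofReal_integral_eq_lintegral_ofReal hdensity.integrableOn_Icc
      (Filter.Eventually.of_forall fun x => by positivity),
    integral_Icc_eq_integral_Ioc, ← intervalIntegral.integral_of_le (by linarith),
    intervalIntegral.integral_const_mul, integral_exp_neg_abs_div b c hb.ne' hc]
  congr 1
  field_simp

end Laplace

theorem stmt_11_general (k : ℕ) (h : (Fin k → Bool) → ℝ) (j : Fin k → Bool) (p : ℕ)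
    (hp : (Finset.univ.filter fun i => j i = true).card = p + 1)
    (S : Finset (Fin k → Bool))
    (hSj : ∀ γ, cubeLe γ j → γ ∈ S)
    (ε t δ : ℝ) (hε : 0 < ε) (ht : 0 < t) (hδ : δ ∈ Set.Ioo (0 : ℝ) 1)
    (P : Measure (↥S → ℝ))
    (hP : P = Measure.pi fun _ : ↥S =>
      laplaceMeasure (2 * S.card / ε * (2 : ℝ) ^ (-(k : ℝ) / 2))) :
    ENNReal.ofReal (1 - δ) ≤
      P {x | ∑ γ ∈ Finset.univ.filter (fun γ => cubeLe γ j),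
          |proj j h γ - perturbedMarginal S h j hSj ε t x γ| ≤
        4 * S.card / ε *
          ((2 : ℝ) ^ p * Real.log (S.card / δ) + t * S.card)} := by
  obtain ⟨hδ0, hδ1⟩ := hδ
  have hS : (1 : ℝ) ≤ S.card := by
    exact_mod_cast card_pos.mpr ⟨_, hSj _ fun i => Bool.false_le (j i)⟩
  set b := 2 * S.card / ε * (2 : ℝ) ^ (-(k : ℝ) / 2)
  set L := Real.log (S.card / δ)
  have hb : 0 < b := by positivity
  have hL : 0 ≤ L := Real.log_nonneg (by rw [le_div_iff₀ hδ0]; linarith)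
  have htail : Real.exp (-(b * L / b)) = δ / S.card := by
    rw [mul_div_cancel_left₀ _ hb.ne', Real.exp_neg, Real.exp_log (by positivity), inv_div]
  have hbernoulli : 1 - δ ≤ (1 - δ / S.card) ^ S.card := by
    have := one_add_mul_le_pow (a := -(δ / S.card)) (by linarith [div_le_self hδ0.le hS]) S.card
    rwa [mul_neg, mul_div_cancel₀ _ (by positivity), ← sub_eq_add_neg, ← sub_eq_add_neg] at this
  calc ENNReal.ofReal (1 - δ) ≤ ENNReal.ofReal ((1 - δ / S.card) ^ S.card) :=
        ENNReal.ofReal_le_ofReal hbernoulli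
    _ = P (Set.univ.pi fun _ => Set.Icc (-(b * L)) (b * L)) := by
        rw [hP, Measure.pi_pi, laplaceMeasure_Icc hb (by positivity), htail, prod_const,
          card_univ, Fintype.card_coe,
          ENNReal.ofReal_pow (by linarith [div_le_self hδ0.le hS])]
    _ ≤ _ := measure_mono fun x hx => sum_abs_proj_sub_perturbedMarginal_le_of_abs_le h j hp S hSj
        hε.le ht.le x fun γ => abs_le.mpr (hx γ (Set.mem_univ γ))

/-- Utility of the Fourier-domain Laplace mechanism: with `p = ‖j‖₁ − 1`, `S ∋ 0`
containing all `γ ⪯ j`, independent Laplace noise of scale `2|S|·ε⁻¹·2^{−k/2}` and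
the shift `4t|S|²·ε⁻¹·2^{−k/2}` on `z_0`, with probability at least `1 − δ` the
perturbed marginal satisfies
`‖C^j h − h^j‖₁ ≤ (4|S|/ε)·(2^p·ln(|S|/δ) + t·|S|)`. -/
theorem stmt_11 (k : ℕ) (h : (Fin k → Bool) → ℝ) (j : Fin k → Bool) (p : ℕ)
    (hp : (Finset.univ.filter fun i => j i = true).card = p + 1)
    (S : Finset (Fin k → Bool)) (hS0 : (fun _ => false) ∈ S)
    (hSj : ∀ γ, cubeLe γ j → γ ∈ S)
    (ε t δ : ℝ) (hε : 0 < ε) (ht : 0 < t) (hδ : δ ∈ Set.Ioo (0 : ℝ) 1)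
    (P : Measure (↥S → ℝ))
    (hP : P = Measure.pi fun _ : ↥S =>
      laplaceMeasure (2 * S.card / ε * (2 : ℝ) ^ (-(k : ℝ) / 2))) :
    ENNReal.ofReal (1 - δ) ≤
      P {x | ∑ γ ∈ Finset.univ.filter (fun γ => cubeLe γ j),
          |proj j h γ - perturbedMarginal S h j hSj ε t x γ| ≤
        4 * S.card / ε *
          ((2 : ℝ) ^ p * Real.log (S.card / δ) + t * S.card)} :=
  stmt_11_general k h j p hp S hSj ε t δ hε ht hδ P hP
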